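/- Let q₁, …, q_m ∈ K⟨X⟩ each have rank 2 and a₀, …, a_{m−1} ∈ K. Then the polynomial p = q_m q_{m−1} ⋯ q₁ + a_{m−1} q_{m−1} ⋯ q₁ + … + a₂ q₂ q₁ + a₁ q₁ + a₀ has rank(p) = m + 1. -/

import Mathlib

/-!
Write `w⁻¹f : v ↦ f (w v)` for the left quotient (`leftShift`); the Hankel rank of `p` is the
dimension of the span of all `w⁻¹p`. If `p` has a nonzero coefficient at a word of length `d`,
its rank exceeds `d`; and rank at most one forces `p ∈ K`. So an element of rank 2 is affine,
`q = α + ℓ` with `ℓ` a nonzero linear form. For affine `q`, `x⁻¹(q r) = q(1) x⁻¹r + ℓ(x) r`,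
hence the span of the partial products `Q_j = q_j ⋯ q_1`, `j ≤ m`, is stable under left
quotients; it contains `p`, so the rank of `p` is at most `m + 1`. Conversely `Q_m` has a nonzero
coefficient at a word of length `m`, where every `Q_j` with `j < m` vanishes, so the rank of `p`
is at least `m + 1`.
-/

/-- The Hankel rank of `p ∈ K⟨X⟩`. -/
noncomputable def hankelRank {K X : Type*} [Field K]
    (p : MonoidAlgebra K (FreeMonoid X)) : ℕ :=
  Module.finrank K (Submodule.span K
    (Set.range (fun w₁ : FreeMonoid X => (fun w₂ : FreeMonoid X => p.coeff (w₁ * w₂)))))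

/-- `chainProd q n = q_{n} ⋯ q_2 q_1` (with `q i` denoting `q_{i+1}`). -/
def chainProd {R : Type*} [Monoid R] (q : ℕ → R) : ℕ → R
  | 0 => 1
  | n + 1 => q n * chainProd q (n)

theorem linearIndependent_of_triangular_eval {K ι β : Type*} [Field K] [Fintype ι]
    [LinearOrder ι] (f : ι → β → K) (e : ι → β) (hdiag : ∀ i, f i (e i) ≠ 0)
    (htri : ∀ i j, j < i → f i (e j) = 0) : LinearIndependent K f := by
  classical
  have hM : (Matrix.of fun i j => f i (e j)).det ≠ 0 := by
    rw [Matrix.det_of_isUpperTriangular (M := .of fun i j => f i (e j)) fun i j => htri i j]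
    exact Finset.prod_ne_zero_iff.mpr fun i _ => hdiag i
  exact LinearIndependent.of_comp (LinearMap.funLeft K K e)
    (Matrix.linearIndependent_rows_of_det_ne_zero hM)

namespace FreeMonoid

variable {X : Type*}

theorem finite_setOf_exists_mul_eq (u : FreeMonoid X) :
    {w : FreeMonoid X | ∃ v, w * v = u}.Finite := by
  refine (u.toList.inits.map ofList).finite_toSet.subset ?_
  rintro w ⟨v, rfl⟩
  simp only [Set.mem_ofPred_eq, List.mem_map, List.mem_inits]
  exact ⟨w.toList, List.prefix_append _ _, rfl⟩

end FreeMonoid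

section HankelRank

open FreeMonoid Module

variable {K X : Type*} [Field K]

def leftShift (w : FreeMonoid X) : (FreeMonoid X → K) →ₗ[K] (FreeMonoid X → K) :=
  LinearMap.funLeft K K (w * ·)

theorem leftShift_apply (w : FreeMonoid X) (f : FreeMonoid X → K) (v : FreeMonoid X) :
    leftShift w f v = f (w * v) := rfl

theorem leftShift_mul (w₁ w₂ : FreeMonoid X) (f : FreeMonoid X → K) :
    leftShift (w₁ * w₂) f = leftShift w₂ (leftShift w₁ f) :=
  funext fun v => by simp only [leftShift_apply, mul_assoc]

def hankelSpace (f : FreeMonoid X → K) : Submodule K (FreeMonoid X → K) :=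
  Submodule.span K (Set.range fun w => leftShift w f)

theorem hankelRank_eq_finrank_hankelSpace (g : MonoidAlgebra K (FreeMonoid X)) :
    hankelRank g = finrank K (hankelSpace ⇑g.coeff) := rfl

theorem hankelSpace_le_of_le_comap {f : FreeMonoid X → K} {S : Submodule K (FreeMonoid X → K)}
    (hf : f ∈ S) (hS : ∀ x, S ≤ S.comap (leftShift (of x))) : hankelSpace f ≤ S := by
  refine Submodule.span_le.mpr ?_
  rintro _ ⟨w, rfl⟩
  induction w using FreeMonoid.inductionOn' generalizing f with
  | one => exact hf
  | of_mul x w ih =>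
    show leftShift (of x * w) f ∈ S
    rw [leftShift_mul]
    exact ih (hS x hf)

instance (g : MonoidAlgebra K (FreeMonoid X)) :
    FiniteDimensional K (hankelSpace ⇑g.coeff) := by
  refine FiniteDimensional.span_of_finite K ?_
  have hP : (⋃ u ∈ g.coeff.support, {w : FreeMonoid X | ∃ v, w * v = u}).Finite :=
    g.coeff.support.finite_toSet.biUnion fun u _ => finite_setOf_exists_mul_eq u
  refine ((hP.image fun w => leftShift w g.coeff).insert 0).subset ?_
  rintro _ ⟨w, rfl⟩
  by_cases h : leftShift w ⇑g.coeff = 0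
  · exact Or.inl h
  obtain ⟨v, hv⟩ := Function.ne_iff.mp h
  exact Or.inr ⟨w, Set.mem_biUnion (Finsupp.mem_support_iff.mpr hv) ⟨v, rfl⟩, rfl⟩

theorem length_lt_hankelRank {g : MonoidAlgebra K (FreeMonoid X)} {w : FreeMonoid X}
    (hw : g.coeff w ≠ 0) : w.length < hankelRank g := by
  obtain ⟨u, hu, hmax⟩ :=
    g.coeff.support.exists_max_image length ⟨w, Finsupp.mem_support_iff.mpr hw⟩
  -- the quotients of `g` by the prefixes of a longest word `u` are triangular against its suffixes
  let f : Fin (u.length + 1) → FreeMonoid X → K :=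
    fun k => leftShift (ofList (u.toList.take k)) g.coeff
  let e : Fin (u.length + 1) → FreeMonoid X := fun k => ofList (u.toList.drop k)
  have hind : LinearIndependent K f := by
    refine linearIndependent_of_triangular_eval f e (fun k => ?_) (fun i j hji => ?_)
    · simpa [f, e, leftShift_apply, ← ofList_append] using Finsupp.mem_support_iff.mp hu
    · by_contra hne
      have hlen : (u.toList.take i ++ u.toList.drop j).length ≤ u.toList.length :=
        hmax (ofList _) (Finsupp.mem_support_iff.mpr hne)
      simp only [List.length_append, List.length_take, List.length_drop] at hlen
      have hi := i.2
      have hu_len : u.length = u.toList.length := rfl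
      omega
  have hspan : Submodule.span K (Set.range f) ≤ hankelSpace g.coeff :=
    Submodule.span_le.mpr <| Set.range_subset_iff.mpr fun k => Submodule.subset_span ⟨_, rfl⟩
  have hwu := hmax w (Finsupp.mem_support_iff.mpr hw)
  calc w.length < u.length + 1 := by omega
    _ = finrank K (Submodule.span K (Set.range f)) := by
      rw [finrank_span_eq_card hind, Fintype.card_fin]
    _ ≤ finrank K (hankelSpace ⇑g.coeff) := Submodule.finrank_mono hspan
    _ = hankelRank g := (hankelRank_eq_finrank_hankelSpace g).symm

def IsAffine (g : MonoidAlgebra K (FreeMonoid X)) : Prop :=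
  ∀ w ∈ g.coeff.support, w.length ≤ 1

theorem hankelRank_le_one {g : MonoidAlgebra K (FreeMonoid X)} (hg : ∀ w ≠ 1, g.coeff w = 0) :
    hankelRank g ≤ 1 := by
  classical
  let δ : FreeMonoid X → K := Pi.single 1 1
  have hshift : ∀ w, leftShift w g.coeff = g.coeff w • δ := by
    intro w
    funext v
    by_cases hv : v = 1
    · simp [δ, hv, leftShift_apply]
    · have hwv : w * v ≠ 1 := fun h =>
        hv (toList.injective (List.append_eq_nil_iff.mp (congrArg toList h)).2)
      simp [δ, hv, leftShift_apply, hg (w * v) hwv]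
  calc hankelRank g = finrank K (hankelSpace ⇑g.coeff) :=
        hankelRank_eq_finrank_hankelSpace g
    _ ≤ finrank K (K ∙ δ) := by
        refine Submodule.finrank_mono (Submodule.span_le.mpr ?_)
        rintro _ ⟨w, rfl⟩
        show leftShift w g.coeff ∈ _
        rw [hshift]
        exact Submodule.smul_mem _ _ (Submodule.mem_span_singleton_self _)
    _ ≤ 1 := (finrank_span_le_card _).trans (by simp)

theorem exists_letter_coeff_ne_zero_of_hankelRank_eq_two {g : MonoidAlgebra K (FreeMonoid X)}
    (hg : hankelRank g = 2) : ∃ x, g.coeff (of x) ≠ 0 := by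
  obtain ⟨w, hw1, hw⟩ : ∃ w ≠ 1, g.coeff w ≠ 0 := by
    by_contra! h
    have := hankelRank_le_one h
    omega
  have hlen : w.length = 1 := by
    have := length_lt_hankelRank hw
    have := mt length_eq_zero.mp hw1
    omega
  obtain ⟨x, rfl⟩ := length_eq_one.mp hlen
  exact ⟨x, hw⟩

theorem isAffine_of_hankelRank_eq_two {g : MonoidAlgebra K (FreeMonoid X)}
    (hg : hankelRank g = 2) : IsAffine g := fun _ hw => by
  have := length_lt_hankelRank (Finsupp.mem_support_iff.mp hw)
  omega

theorem IsAffine.coeff_mul_of_mul {g : MonoidAlgebra K (FreeMonoid X)}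
    (hg : IsAffine g) (r : MonoidAlgebra K (FreeMonoid X)) (x : X)
    (u : FreeMonoid X) :
    (g * r).coeff (of x * u) = g.coeff 1 * r.coeff (of x * u) + g.coeff (of x) * r.coeff u := by
  classical
  have hsum : (g * r).coeff (of x * u) =
      ∑ a ∈ g.coeff.support, (MonoidAlgebra.single a (g.coeff a) * r).coeff (of x * u) := by
    conv_lhs => rw [← g.sum_coeff_single]
    rw [Finsupp.sum, Finset.sum_mul, MonoidAlgebra.coeff_sum, Finsupp.finsetSum_apply]
  rw [hsum, Finset.sum_eq_add 1 (of x) (one_ne_of x), MonoidAlgebra.coeff_single_one_mul,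
    MonoidAlgebra.coeff_single_mul_eq_mul_coeff u fun _ _ => mul_right_inj _]
  · intro a ha ⟨ha1, hax⟩
    have hlen : a.length = 1 := by
      have := mt length_eq_zero.mp ha1
      have := hg a ha
      omega
    obtain ⟨y, rfl⟩ := length_eq_one.mp hlen
    refine MonoidAlgebra.coeff_single_mul_of_forall_mul_ne _ _ fun d hd => hax ?_
    have hlist : y :: d.toList = x :: u.toList := congrArg toList hd
    rw [(List.cons_eq_cons.mp hlist).1]
  all_goals intro h; simp [Finsupp.notMem_support_iff.mp h]

theorem chainProd_zero {R : Type*} [Monoid R] (q : ℕ → R) : chainProd q 0 = 1 := rfl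

theorem chainProd_succ {R : Type*} [Monoid R] (q : ℕ → R) (n : ℕ) :
    chainProd q (n + 1) = q n * chainProd q n := rfl

section ChainProd

variable {q : ℕ → MonoidAlgebra K (FreeMonoid X)} {n : ℕ}

theorem coeff_chainProd_eq_zero_of_lt_length
    (hq : ∀ i < n, IsAffine (q i)) {w : FreeMonoid X}
    (hw : n < w.length) : (chainProd q n).coeff w = 0 := by
  induction n generalizing w with
  | zero =>
    rw [chainProd_zero, MonoidAlgebra.one_def, MonoidAlgebra.coeff_single,
      Finsupp.single_eq_of_ne (fun h => by rw [h, length_one] at hw; omega)]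
  | succ n ih =>
    cases w with
    | one => simp at hw
    | of_mul x u =>
      have hu : n < u.length := by simpa [length_mul, add_comm] using hw
      rw [chainProd_succ, (hq n n.lt_succ_self).coeff_mul_of_mul,
        ih (fun i hi => hq i (by omega)) (hu.trans (by simp [length_mul])),
        ih (fun i hi => hq i (by omega)) hu, mul_zero, mul_zero, add_zero]

theorem exists_length_eq_and_coeff_chainProd_ne_zero
    (hq : ∀ i < n, IsAffine (q i))
    (hletter : ∀ i < n, ∃ x, (q i).coeff (of x) ≠ 0) :
    ∃ w : FreeMonoid X, w.length = n ∧ (chainProd q n).coeff w ≠ 0 := by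
  induction n with
  | zero => exact ⟨1, rfl, by simp [chainProd_zero]⟩
  | succ n ih =>
    have hq' : ∀ i < n, IsAffine (q i) := fun i hi => hq i (by omega)
    obtain ⟨w, hlen, hw⟩ := ih hq' fun i hi => hletter i (by omega)
    obtain ⟨x, hx⟩ := hletter n n.lt_succ_self
    refine ⟨of x * w, by simp [length_mul, hlen, add_comm], ?_⟩
    rw [chainProd_succ, (hq n n.lt_succ_self).coeff_mul_of_mul,
      coeff_chainProd_eq_zero_of_lt_length hq' (by simp [length_mul, hlen]), mul_zero, zero_add]
    exact mul_ne_zero hx hw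

variable (q) in
def chainProdSpan (n : ℕ) : Submodule K (FreeMonoid X → K) :=
  Submodule.span K (Set.range fun i : Fin n => ⇑(chainProd q i).coeff)

instance : FiniteDimensional K (chainProdSpan q n) :=
  FiniteDimensional.span_of_finite K (Set.finite_range _)

theorem coeff_chainProd_mem_chainProdSpan {i : ℕ} (h : i < n) :
    ⇑(chainProd q i).coeff ∈ chainProdSpan q n :=
  Submodule.subset_span ⟨⟨i, h⟩, rfl⟩

theorem chainProdSpan_mono : Monotone (chainProdSpan q) := fun _ _ h =>
  Submodule.span_le.mpr <| Set.range_subset_iff.mpr fun i =>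
    coeff_chainProd_mem_chainProdSpan (i.2.trans_le h)

theorem leftShift_chainProd_mem_chainProdSpan
    (hq : ∀ i < n, IsAffine (q i)) (x : X) :
    leftShift (of x) ⇑(chainProd q n).coeff ∈ chainProdSpan q n := by
  induction n with
  | zero =>
    have hzero : leftShift (of x) ⇑(chainProd q 0).coeff = 0 := funext fun v =>
      coeff_chainProd_eq_zero_of_lt_length hq (by rw [length_mul, length_of]; omega)
    exact hzero ▸ zero_mem _
  | succ n ih =>
    have hquot : leftShift (of x) ⇑(chainProd q (n + 1)).coeff =
        (q n).coeff 1 • leftShift (of x) ⇑(chainProd q n).coeff +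
          (q n).coeff (of x) • ⇑(chainProd q n).coeff :=
      funext fun v => (hq n n.lt_succ_self).coeff_mul_of_mul _ x v
    rw [hquot]
    exact add_mem (Submodule.smul_mem _ _ (chainProdSpan_mono n.le_succ
        (ih fun i hi => hq i (by omega))))
      (Submodule.smul_mem _ _ (coeff_chainProd_mem_chainProdSpan n.lt_succ_self))

theorem hankelSpace_le_chainProdSpan (hq : ∀ i < n, IsAffine (q i))
    {f : FreeMonoid X → K} (hf : f ∈ chainProdSpan q (n + 1)) :
    hankelSpace f ≤ chainProdSpan q (n + 1) :=
  hankelSpace_le_of_le_comap hf fun x => Submodule.span_le.mpr <| Set.range_subset_iff.mpr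
    fun i => chainProdSpan_mono i.2.le <| leftShift_chainProd_mem_chainProdSpan
      (fun j hj => hq j (hj.trans_le (Nat.lt_succ_iff.mp i.2))) x

theorem hankelRank_le_of_coeff_mem_chainProdSpan (hq : ∀ i < n, IsAffine (q i))
    {g : MonoidAlgebra K (FreeMonoid X)} (hg : ⇑g.coeff ∈ chainProdSpan q (n + 1)) :
    hankelRank g ≤ n + 1 :=
  calc hankelRank g = finrank K (hankelSpace ⇑g.coeff) := hankelRank_eq_finrank_hankelSpace g
    _ ≤ finrank K (chainProdSpan q (n + 1)) :=
      Submodule.finrank_mono (hankelSpace_le_chainProdSpan hq hg)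
    _ ≤ n + 1 := (finrank_range_le_card _).trans (Fintype.card_fin _).le

end ChainProd

end HankelRank

/-- If `q₁, …, q_m` have rank 2 and `a₀, …, a_{m−1}` are scalars, then
`p = q_m⋯q₁ + a_{m−1} q_{m−1}⋯q₁ + … + a₁ q₁ + a₀` has rank `m + 1`. -/
theorem rank_companion_polynomial {K X : Type*} [Field K]
    (m : ℕ) (q : ℕ → MonoidAlgebra K (FreeMonoid X)) (a : ℕ → K)
    (hq : ∀ i < m, hankelRank (q i) = 2) :
    hankelRank (chainProd q m +
      ∑ i ∈ Finset.range m, a i • chainProd q i) = m + 1 := by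
  set p := chainProd q m + ∑ i ∈ Finset.range m, a i • chainProd q i
  have haff i (hi : i < m) := isAffine_of_hankelRank_eq_two (hq i hi)
  have hcoeff : ⇑p.coeff =
      ⇑(chainProd q m).coeff + ∑ i ∈ Finset.range m, a i • ⇑(chainProd q i).coeff := by
    simp only [p, MonoidAlgebra.coeff_add, MonoidAlgebra.coeff_sum, MonoidAlgebra.coeff_smul,
      Finsupp.coe_add, Finsupp.coe_finsetSum, Finsupp.coe_smul]
  obtain ⟨w, hlen, hw⟩ := exists_length_eq_and_coeff_chainProd_ne_zero haff
    fun i hi => exists_letter_coeff_ne_zero_of_hankelRank_eq_two (hq i hi)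
  have hpw : p.coeff w = (chainProd q m).coeff w := by
    rw [congrFun hcoeff w, Pi.add_apply, Finset.sum_apply, Finset.sum_eq_zero, add_zero]
    intro i hi
    have hi := Finset.mem_range.mp hi
    rw [Pi.smul_apply, coeff_chainProd_eq_zero_of_lt_length (fun j hj => haff j (hj.trans hi))
      (hlen ▸ hi), smul_zero]
  refine le_antisymm (hankelRank_le_of_coeff_mem_chainProdSpan haff (hcoeff ▸ ?_)) ?_
  · exact add_mem (coeff_chainProd_mem_chainProdSpan m.lt_succ_self) <| Submodule.sum_mem _
      fun i hi => Submodule.smul_mem _ _ <|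
        coeff_chainProd_mem_chainProdSpan (Nat.lt_succ_of_lt (Finset.mem_range.mp hi))
  · have := length_lt_hankelRank (hpw ▸ hw : p.coeff w ≠ 0)
    omega
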